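/- arXiv:2105.07663 — 6 statements merged into one kernel-verified Lean document; each statement's English description precedes it below -/
import Mathlib

section
/- Let active be a finite set of coins and hc a finite set of address–coin pairs with C_a = {c : (a,c) ∈ hc}. Define M_Inact = {c ∉ active : ∃ a, c ∈ C_a}, M_Least = {c ∈ active : ∀ a, c ∉ C_a}, M_Most = {c : ∃ a ≠ b, c ∈ C_a ∧ c ∈ C_b}, M_Pairs = {(a,c) : c ∈ C_a ∧ ∃ b ≠ a, c ∈ C_b}, V_≤ = |M_Least|, V_≥ = |M_Inact| + |M_Pairs| − |M_Most|. If V_≥ = 0, then Σ_a |C_a| = |active| + V_≥ − V_≤, i.e., Σ_a |C_a| = |active| − |M_Least|. -/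
/-! With no inactive owned coins and no doubly owned coins, `Prod.snd` is injective on the
ownership relation `hc` and maps it onto the active coins that have an owner, i.e. onto
`active \ MLeast`; summing the sizes of the sections `C a` counts `hc` itself. The excess
`|MInact| + |MPairs| - |MMost|` vanishing forces both error sets to be empty because every
doubly owned coin contributes at least two pairs to `MPairs`. -/

open Finset

theorem sum_card_eq_card_of_mem_iff {α β : Type*} [DecidableEq α] {s : Finset (α × β)}
    {C : α → Finset β} (hC : ∀ a c, c ∈ C a ↔ (a, c) ∈ s) :
    ∑ a ∈ s.image Prod.fst, #(C a) = #s := by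
  classical
  rw [card_eq_sum_card_image Prod.fst s]
  refine sum_congr rfl fun a _ => ?_
  have hsection : (C a).image (Prod.mk a) = {p ∈ s | p.1 = a} := by
    ext ⟨a', c⟩
    simp only [mem_image, mem_filter, Prod.mk.injEq, hC]
    constructor
    · rintro ⟨c, hc, rfl, rfl⟩
      exact ⟨hc, rfl⟩
    · rintro ⟨hc, rfl⟩
      exact ⟨c, hc, rfl, rfl⟩
  rw [← hsection, card_image_of_injective _ (Prod.mk_right_injective a)]

theorem two_mul_card_le_card_of_shared {α β : Type*} [DecidableEq β] {C : α → Finset β}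
    {shared : Finset β} {pairs : Finset (α × β)}
    (hshared : ∀ c, c ∈ shared ↔ ∃ a b, a ≠ b ∧ c ∈ C a ∧ c ∈ C b)
    (hpairs : ∀ a c, (a, c) ∈ pairs ↔ (c ∈ C a ∧ ∃ b, b ≠ a ∧ c ∈ C b)) :
    2 * #shared ≤ #pairs := by
  classical
  refine mul_card_image_le_card_of_maps_to (f := Prod.snd) ?_ 2 ?_
  · rintro ⟨a, c⟩ hac
    obtain ⟨ha, b, hba, hb⟩ := (hpairs a c).1 hac
    exact (hshared c).2 ⟨a, b, hba.symm, ha, hb⟩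
  · intro c hc
    obtain ⟨a, b, hab, ha, hb⟩ := (hshared c).1 hc
    have hfiber : {(a, c), (b, c)} ⊆ {p ∈ pairs | p.2 = c} := by
      simp only [insert_subset_iff, singleton_subset_iff, mem_filter, hpairs, and_true]
      exact ⟨⟨ha, b, hab.symm, hb⟩, hb, a, hab, ha⟩
    simpa [card_pair (Prod.mk_left_injective c |>.ne hab)] using card_le_card hfiber

theorem image_snd_eq_sdiff {α β : Type*} [DecidableEq β] {s : Finset (α × β)}
    {C : α → Finset β} (hC : ∀ a c, c ∈ C a ↔ (a, c) ∈ s) {active unowned : Finset β}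
    (hactive : ∀ a c, c ∈ C a → c ∈ active)
    (hunowned : ∀ c, c ∈ unowned ↔ (c ∈ active ∧ ∀ a, c ∉ C a)) :
    s.image Prod.snd = active \ unowned := by
  ext c
  simp only [mem_image, mem_sdiff, hunowned, not_and, not_forall, not_not, Prod.exists,
    exists_eq_right, ← hC]
  constructor
  · rintro ⟨a, ha⟩
    exact ⟨hactive a c ha, fun _ => ⟨a, ha⟩⟩
  · rintro ⟨hc, howned⟩
    exact howned hc

theorem stmt4 {Address Coin : Type*} [DecidableEq Address] [DecidableEq Coin]
    (active : Finset Coin) (hc : Finset (Address × Coin))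
    (C : Address → Finset Coin) (hC : ∀ a c, c ∈ C a ↔ (a, c) ∈ hc)
    (MInact MLeast MMost : Finset Coin) (MPairs : Finset (Address × Coin))
    (hInact : ∀ c, c ∈ MInact ↔ (c ∉ active ∧ ∃ a, c ∈ C a))
    (hLeast : ∀ c, c ∈ MLeast ↔ (c ∈ active ∧ ∀ a, c ∉ C a))
    (hMost : ∀ c, c ∈ MMost ↔ ∃ a b, a ≠ b ∧ c ∈ C a ∧ c ∈ C b)
    (hPairs : ∀ a c, (a, c) ∈ MPairs ↔ (c ∈ C a ∧ ∃ b, b ≠ a ∧ c ∈ C b))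
    (hVge : (MInact.card : ℤ) + MPairs.card - MMost.card = 0) :
    (∑ a ∈ hc.image Prod.fst, ((C a).card : ℤ)) = (active.card : ℤ) - MLeast.card := by
  have hpairsBound := two_mul_card_le_card_of_shared hMost hPairs
  have hInactEmpty : MInact = ∅ := card_eq_zero.1 (by omega)
  have hMostEmpty : MMost = ∅ := card_eq_zero.1 (by omega)
  have hOwnedActive : ∀ a c, c ∈ C a → c ∈ active := fun a c ha => by
    by_contra hc'
    simpa [hInactEmpty] using (hInact c).2 ⟨hc', a, ha⟩
  have hInj : Set.InjOn Prod.snd (hc : Set (Address × Coin)) := by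
    rintro ⟨a, c⟩ ha ⟨b, c'⟩ hb (rfl : c = c')
    by_contra hab
    have hab' : a ≠ b := fun h => hab (h ▸ rfl)
    simpa [hMostEmpty] using (hMost c).2 ⟨a, b, hab', (hC a c).2 ha, (hC b c).2 hb⟩
  have hLeastSub : MLeast ⊆ active := fun c h => ((hLeast c).1 h).1
  rw [← Nat.cast_sum, sum_card_eq_card_of_mem_iff hC, ← card_image_of_injOn hInj,
    image_snd_eq_sdiff hC hOwnedActive hLeast, card_sdiff_of_subset hLeastSub,
    Nat.cast_sub (card_le_card hLeastSub)]
end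

section
/- Let active be a finite set of coins and hc a finite set of address–coin pairs with C_a = {c : (a,c) ∈ hc}, and error sets M_Inact, M_Least, M_Most, M_Pairs defined as: M_Inact = {c ∉ active : ∃ a, c ∈ C_a}, M_Least = {c ∈ active : ∀ a, c ∉ C_a}, M_Most = {c : ∃ a ≠ b, c ∈ C_a ∧ c ∈ C_b}, M_Pairs = {(a,c) : c ∈ C_a ∧ ∃ b ≠ a, c ∈ C_b}. If M_Least = ∅, then Σ_a |C_a| = |active| + |M_Inact| + |M_Pairs| − |M_Most|. -/
/-!
Count the owned pairs `hc` in two ways. Grouped by address they give `∑ a, #(C a)`; grouped by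
coin, every owned coin contributes its number of owners. A coin outside `MMost` has exactly one
owner, while the coins of `MMost` together contribute `#MPairs`, so `#hc = #owned - #MMost +
#MPairs`. Since no active coin is unowned, the owned coins are exactly `active ⊔ MInact`.
-/

open Finset

namespace Finset

variable {α β : Type*}

theorem sum_card_fiber_image_fst [DecidableEq α] (s : Finset (α × β)) (C : α → Finset β)
    (hC : ∀ a c, c ∈ C a ↔ (a, c) ∈ s) :
    ∑ a ∈ s.image Prod.fst, #(C a) = #s := by
  rw [card_eq_sum_card_fiberwise fun p hp => mem_image_of_mem Prod.fst hp]
  refine sum_congr rfl fun a _ => ?_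
  have hfiber : s.filter (·.1 = a) = (C a).map ⟨Prod.mk a, Prod.mk_right_injective a⟩ := by
    ext ⟨b, c⟩
    simp only [mem_filter, mem_map, Function.Embedding.coeFn_mk, Prod.mk.injEq, hC]
    constructor
    · rintro ⟨hbc, rfl⟩
      exact ⟨c, hbc, rfl, rfl⟩
    · rintro ⟨c, hac, rfl, rfl⟩
      exact ⟨hac, rfl⟩
  rw [hfiber, card_map]

theorem card_filter_snd_eq_one [DecidableEq β] {s : Finset (α × β)} {c : β} (hc : c ∈ s.image Prod.snd)
    (hunique : ∀ a b, (a, c) ∈ s → (b, c) ∈ s → a = b) :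
    #(s.filter (·.2 = c)) = 1 := by
  obtain ⟨p, hp, rfl⟩ := mem_image.1 hc
  refine le_antisymm (card_le_one.2 fun q hq r hr => ?_) (card_pos.2 ⟨p, mem_filter.2 ⟨hp, rfl⟩⟩)
  obtain ⟨hq, hqc⟩ := mem_filter.1 hq
  obtain ⟨hr, hrc⟩ := mem_filter.1 hr
  refine Prod.ext (hunique q.1 r.1 ?_ ?_) (hqc.trans hrc.symm)
  · simpa [← hqc] using hq
  · simpa [← hrc] using hr

theorem card_add_card_shared [DecidableEq β] (s : Finset (α × β)) (M : Finset β)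
    (hM : ∀ c, c ∈ M ↔ ∃ a b, a ≠ b ∧ (a, c) ∈ s ∧ (b, c) ∈ s) :
    #s + #M = #(s.image Prod.snd) + #(s.filter (·.2 ∈ M)) := by
  set fiber : β → ℕ := fun c => #(s.filter (·.2 = c))
  have hMsub : M ⊆ s.image Prod.snd := fun c hc => by
    obtain ⟨a, -, -, hac, -⟩ := (hM c).1 hc
    exact mem_image.2 ⟨(a, c), hac, rfl⟩
  have hs : #s = ∑ c ∈ s.image Prod.snd, fiber c :=
    card_eq_sum_card_fiberwise fun p hp => mem_image_of_mem Prod.snd hp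
  have hshared : #(s.filter (·.2 ∈ M)) = ∑ c ∈ M, fiber c := by
    rw [card_eq_sum_card_fiberwise (s := s.filter (·.2 ∈ M)) (t := M) (f := Prod.snd) fun p hp => (mem_filter.1 hp).2]
    refine sum_congr rfl fun c hc => ?_
    rw [filter_filter]
    exact congrArg card (filter_congr fun p _ => ⟨And.right, fun h => ⟨h ▸ hc, h⟩⟩)
  have hsingle : ∑ c ∈ s.image Prod.snd \ M, fiber c = #(s.image Prod.snd \ M) := by
    rw [card_eq_sum_ones]
    refine sum_congr rfl fun c hc => ?_
    obtain ⟨hc, hcM⟩ := mem_sdiff.1 hc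
    refine card_filter_snd_eq_one hc fun a b ha hb => ?_
    by_contra hab
    exact hcM ((hM c).2 ⟨a, b, hab, ha, hb⟩)
  have hsplit := sum_sdiff (f := fiber) hMsub
  have hcard := card_sdiff_add_card_eq_card hMsub
  omega

end Finset

theorem stmt5 {Address Coin : Type*} [DecidableEq Address] [DecidableEq Coin]
    (active : Finset Coin) (hc : Finset (Address × Coin))
    (C : Address → Finset Coin) (hC : ∀ a c, c ∈ C a ↔ (a, c) ∈ hc)
    (MInact MLeast MMost : Finset Coin) (MPairs : Finset (Address × Coin))
    (hInact : ∀ c, c ∈ MInact ↔ (c ∉ active ∧ ∃ a, c ∈ C a))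
    (hLeast : ∀ c, c ∈ MLeast ↔ (c ∈ active ∧ ∀ a, c ∉ C a))
    (hMost : ∀ c, c ∈ MMost ↔ ∃ a b, a ≠ b ∧ c ∈ C a ∧ c ∈ C b)
    (hPairs : ∀ a c, (a, c) ∈ MPairs ↔ (c ∈ C a ∧ ∃ b, b ≠ a ∧ c ∈ C b))
    (hEmpty : MLeast = ∅) :
    (∑ a ∈ hc.image Prod.fst, ((C a).card : ℤ))
      = (active.card : ℤ) + MInact.card + MPairs.card - MMost.card := by
  have hOwned (c : Coin) : c ∈ hc.image Prod.snd ↔ ∃ a, c ∈ C a := by simp [hC]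
  have hActive : active ⊆ hc.image Prod.snd := fun c hca => by
    by_contra hc'
    simpa [hEmpty] using (hLeast c).2 ⟨hca, by simpa [hOwned] using hc'⟩
  have hInactEq : MInact = hc.image Prod.snd \ active := by
    ext c
    rw [hInact, mem_sdiff, hOwned, and_comm]
  have hPairsEq : MPairs = hc.filter (·.2 ∈ MMost) := by
    ext ⟨a, c⟩
    simp only [mem_filter, hPairs, hMost, hC]
    refine ⟨fun ⟨ha, b, hba, hb⟩ => ⟨ha, b, a, hba, hb, ha⟩, fun ⟨ha, x, y, hxy, hx, hy⟩ => ⟨ha, ?_⟩⟩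
    by_cases hxa : x = a
    · exact ⟨y, fun hya => hxy (hxa.trans hya.symm), hy⟩
    · exact ⟨x, hxa, hx⟩
  have hcount := card_add_card_shared hc MMost (by simpa only [hC] using hMost)
  have hsplit := card_sdiff_add_card_eq_card hActive
  rw [← hPairsEq] at hcount
  rw [← hInactEq] at hsplit
  rw [← Nat.cast_sum, sum_card_fiber_image_fst hc C hC]
  omega
end

section
/- Let Coin be a type, count : Coin → ℕ+ a bijection, idx : Address × Coin → ℕ+ with idx(a,·) bijective for each address a, sum : ℕ and bal : Address → ℕ. Define active = {c : count(c) ≤ sum} and hc = {(a,c) : idx(a,c) ≤ bal(a)}, and suppose the invariants hold: every owned coin is active, every active coin is owned by some address, and no coin is owned by two distinct addresses. Then Σ_a bal(a) = sum (the sum over addresses with bal(a) > 0, which is assumed finite). -/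
/-!
Bijectivity of `idx a` makes the set of coins owned by `a` have exactly `bal a` elements, and
bijectivity of `count` makes the set of active coins have exactly `sum` elements. The invariants
say that the owned sets are pairwise disjoint and that their union is the active set, so counting
the active coins as a disjoint union gives `∑ a, bal a = sum`.
-/

open Function Set

theorem encard_setOf_coe_le_of_bijective {α : Type*} {e : α → ℕ+} (he : Bijective e) (n : ℕ) :
    {x | (e x : ℕ) ≤ n}.encard = n := by
  have hset : {x | (e x : ℕ) ≤ n} = (Equiv.pnatEquivNat ∘ e) ⁻¹' Iio n := by
    ext x
    simp only [mem_ofPred_eq, mem_preimage, comp_apply, Equiv.pnatEquivNat_apply, mem_Iio,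
      PNat.natPred]
    have := (e x).pos
    omega
  rw [hset, encard_preimage_of_bijective (Equiv.pnatEquivNat.bijective.comp he),
    ← (finite_Iio n).cast_ncard_eq, ncard_Iio_nat]

theorem Finset.encard_eq_sum_of_pairwiseDisjoint {ι α : Type*} {s : Set α} {t : ι → Set α}
    (S : Finset ι) (hdisj : (S : Set ι).PairwiseDisjoint t) (hcover : ⋃ i ∈ S, t i = s) :
    s.encard = ∑ i ∈ S, (t i).encard := by
  rw [← hcover, ← finsum_mem_coe_finset, ← S.finite_toSet.encard_biUnion hdisj]
  simp

theorem stmt9 {Address Coin : Type*} (count : Coin → ℕ+) (idx : Address → Coin → ℕ+)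
    (hcount : Function.Bijective count) (hidx : ∀ a, Function.Bijective (idx a))
    (sum : ℕ) (bal : Address → ℕ) (S : Finset Address) (hS : ∀ a ∉ S, bal a = 0)
    (inv1 : ∀ a c, (idx a c : ℕ) ≤ bal a → (count c : ℕ) ≤ sum)
    (inv2 : ∀ c, (count c : ℕ) ≤ sum → ∃ a, (idx a c : ℕ) ≤ bal a)
    (inv3 : ∀ a b c, (idx a c : ℕ) ≤ bal a → (idx b c : ℕ) ≤ bal b → a = b) :
    ∑ a ∈ S, bal a = sum := by
  have hdisj : (S : Set Address).PairwiseDisjoint fun a => {c | (idx a c : ℕ) ≤ bal a} :=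
    fun a _ b _ hab => disjoint_left.2 fun c ha hb => hab (inv3 a b c ha hb)
  have hcover : ⋃ a ∈ S, {c | (idx a c : ℕ) ≤ bal a} = {c | (count c : ℕ) ≤ sum} := by
    ext c
    simp only [mem_iUnion, mem_ofPred_eq, exists_prop]
    refine ⟨fun ⟨a, _, ha⟩ => inv1 a c ha, fun hc => ?_⟩
    obtain ⟨a, ha⟩ := inv2 c hc
    have haS : a ∈ S := by
      by_contra haS
      have := (idx a c).pos
      have := hS a haS
      omega
    exact ⟨a, haS, ha⟩
  have hcard := S.encard_eq_sum_of_pairwiseDisjoint hdisj hcover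
  simp only [encard_setOf_coe_le_of_bijective hcount,
    encard_setOf_coe_le_of_bijective (hidx _)] at hcard
  exact_mod_cast hcard.symm
end

section
/- Let bal_x, bal_y : Address → ℕ with finite support and sum_x, sum_y : ℕ satisfy Σ_a bal_x(a) = sum_x, Σ_a bal_y(a) = sum_y, and sum_x ≤ sum_y. Suppose active_x is a finite set of coins of size sum_x, and (C_{x,a}) is a family of pairwise disjoint subsets with C_{x,a} ⊆ active_x, |C_{x,a}| = bal_x(a), and ∪_a C_{x,a} = active_x. If the type Coin is infinite, then there exist active_y ⊇ active_x with |active_y| = sum_y and a family (C_{y,a}) of pairwise disjoint sets partitioning active_y with |C_{y,a}| = bal_y(a), such that for every a: bal_x(a) ≤ bal_y(a) implies C_{x,a} ⊆ C_{y,a}, and bal_y(a) ≤ bal_x(a) implies C_{y,a} ⊆ C_{x,a}. -/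
private noncomputable def stmt10.meas {Address : Type*} (f g : Address →₀ ℕ) : ℕ :=
  (f - g).sum (fun _ n => n) + (g - f).sum (fun _ n => n)

private lemma stmt10.sum_eq_T {Address : Type*} (f : Address →₀ ℕ) (T : Finset Address)
    (h : f.support ⊆ T) : f.sum (fun _ n => n) = ∑ a ∈ T, f a :=
  Finsupp.sum_of_support_subset f h _ (fun _ _ => rfl)

private lemma stmt10.meas_eq {Address : Type*} (f g : Address →₀ ℕ) (T : Finset Address)
    (hf : f.support ⊆ T) (hg : g.support ⊆ T) :
    stmt10.meas f g = ∑ a ∈ T, ((f a - g a) + (g a - f a)) := by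
  unfold stmt10.meas
  rw [stmt10.sum_eq_T (f - g) T (subset_trans Finsupp.support_tsub hf),
      stmt10.sum_eq_T (g - f) T (subset_trans Finsupp.support_tsub hg),
      ← Finset.sum_add_distrib]
  simp [Finsupp.tsub_apply]

private lemma stmt10.aux {Address Coin : Type*} [DecidableEq Coin] [Infinite Coin] (n : ℕ) :
    ∀ (balx baly : Address →₀ ℕ) (sumx sumy : ℕ),
      stmt10.meas balx baly = n →
      balx.sum (fun _ n => n) = sumx → baly.sum (fun _ n => n) = sumy →
      sumx ≤ sumy →
      ∀ (activex : Finset Coin), activex.card = sumx →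
      ∀ (Cx : Address → Finset Coin),
      (∀ a, Cx a ⊆ activex) →
      (∀ a, (Cx a).card = balx a) →
      (∀ a b, a ≠ b → Disjoint (Cx a) (Cx b)) →
      (∀ c ∈ activex, ∃ a, c ∈ Cx a) →
      ∃ (activey : Finset Coin) (Cy : Address → Finset Coin),
        activex ⊆ activey ∧ activey.card = sumy ∧
        (∀ a, Cy a ⊆ activey) ∧ (∀ a, (Cy a).card = baly a) ∧
        (∀ a b, a ≠ b → Disjoint (Cy a) (Cy b)) ∧
        (∀ c ∈ activey, ∃ a, c ∈ Cy a) ∧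
        (∀ a, balx a ≤ baly a → Cx a ⊆ Cy a) ∧
        (∀ a, baly a ≤ balx a → Cy a ⊆ Cx a) := by
  induction n using Nat.strong_induction_on with
  | _ n IH =>
  intro balx baly sumx sumy hm hx hy hle activex hax Cx hsub hcard hdisj hcover
  classical
  set T := balx.support ∪ baly.support with hT
  have hTx : balx.support ⊆ T := Finset.subset_union_left
  have hTy : baly.support ⊆ T := Finset.subset_union_right
  have hxT : sumx = ∑ a ∈ T, balx a := by rw [← hx]; exact stmt10.sum_eq_T balx T hTx
  have hyT : sumy = ∑ a ∈ T, baly a := by rw [← hy]; exact stmt10.sum_eq_T baly T hTy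
  by_cases hdec : ∃ a, baly a < balx a
  · -- move a coin from a to some b with balx b < baly b
    obtain ⟨a, ha⟩ := hdec
    have haT : a ∈ T := hTx (Finsupp.mem_support_iff.2 (by omega))
    have hbex : ∃ b, balx b < baly b := by
      by_contra h
      push_neg at h
      have : sumy < sumx := by
        rw [hxT, hyT]
        exact Finset.sum_lt_sum (fun i _ => h i) ⟨a, haT, ha⟩
      omega
    obtain ⟨b, hb⟩ := hbex
    have hbT : b ∈ T := hTy (Finsupp.mem_support_iff.2 (by omega))
    have hab : a ≠ b := by intro h; rw [h] at ha; omega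
    -- a coin to move
    have hne : (Cx a).Nonempty := by
      rw [← Finset.card_pos, hcard a]; omega
    obtain ⟨c, hc⟩ := hne
    have hcb : c ∉ Cx b := fun h => Finset.disjoint_left.1 (hdisj a b hab) hc h
    set balx' : Address →₀ ℕ := (balx.update a (balx a - 1)).update b (balx b + 1) with hbalx'
    have hbx' : ∀ d, balx' d = if d = b then balx b + 1 else if d = a then balx a - 1 else balx d := by
      intro d
      simp only [hbalx', Finsupp.coe_update, Function.update_apply]
    set Cx' : Address → Finset Coin :=
      fun d => if d = b then insert c (Cx b) else if d = a then (Cx a).erase c else Cx d with hCx'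
    have hsupp' : balx'.support ⊆ T := by
      intro d hd
      rw [Finsupp.mem_support_iff, hbx' d] at hd
      by_cases h1 : d = b
      · rwa [h1]
      by_cases h2 : d = a
      · rwa [h2]
      · rw [if_neg h1, if_neg h2] at hd
        exact hTx (Finsupp.mem_support_iff.2 hd)
    -- decompose a sum over T at a and b
    have decomp : ∀ f : Address → ℕ,
        ∑ d ∈ T, f d = f a + f b + ∑ d ∈ (T.erase a).erase b, f d := by
      intro f
      rw [add_assoc, Finset.add_sum_erase _ f (Finset.mem_erase.2 ⟨fun h => hab h.symm, hbT⟩),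
        Finset.add_sum_erase _ f haT]
    have htail : ∑ d ∈ (T.erase a).erase b, balx' d = ∑ d ∈ (T.erase a).erase b, balx d := by
      refine Finset.sum_congr rfl (fun d hd => ?_)
      rw [Finset.mem_erase, Finset.mem_erase] at hd
      rw [hbx' d, if_neg hd.1, if_neg hd.2.1]
    have hx' : balx'.sum (fun _ n => n) = sumx := by
      rw [stmt10.sum_eq_T balx' T hsupp', decomp, htail, hbx' a, hbx' b,
        if_neg hab, if_pos rfl, if_pos rfl, hxT, decomp]
      omega
    have hmeas : stmt10.meas balx' baly < n := by
      rw [← hm, stmt10.meas_eq balx' baly T hsupp' hTy, stmt10.meas_eq balx baly T hTx hTy,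
        decomp, decomp]
      have h1 : ∑ d ∈ (T.erase a).erase b, (balx' d - baly d + (baly d - balx' d)) =
          ∑ d ∈ (T.erase a).erase b, (balx d - baly d + (baly d - balx d)) := by
        refine Finset.sum_congr rfl (fun d hd => ?_)
        rw [Finset.mem_erase, Finset.mem_erase] at hd
        rw [hbx' d, if_neg hd.1, if_neg hd.2.1]
      rw [h1, hbx' a, hbx' b, if_neg hab, if_pos rfl, if_pos rfl]
      omega
    have hsub' : ∀ d, Cx' d ⊆ activex := by
      intro d
      simp only [hCx']
      split_ifs with h1 h2
      · exact Finset.insert_subset (hsub a hc) (hsub b)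
      · exact subset_trans (Finset.erase_subset c (Cx a)) (hsub a)
      · exact hsub d
    have hcard' : ∀ d, (Cx' d).card = balx' d := by
      intro d
      rw [hbx' d]
      simp only [hCx']
      split_ifs with h1 h2
      · rw [Finset.card_insert_of_notMem hcb, hcard b]
      · rw [Finset.card_erase_of_mem hc, hcard a]
      · exact hcard d
    have claim : ∀ d x, x ∈ Cx' d → (x = c ∧ d = b) ∨ (x ≠ c ∧ x ∈ Cx d) := by
      intro d x hx
      simp only [hCx'] at hx
      split_ifs at hx with h1 h2
      · rw [Finset.mem_insert] at hx
        rcases hx with h | h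
        · exact Or.inl ⟨h, h1⟩
        · exact Or.inr ⟨fun he => hcb (he ▸ h), h1 ▸ h⟩
      · rw [Finset.mem_erase] at hx
        exact Or.inr ⟨hx.1, h2 ▸ hx.2⟩
      · refine Or.inr ⟨fun he => ?_, hx⟩
        exact Finset.disjoint_left.1 (hdisj d a (fun h => h2 h)) hx (he ▸ hc)
    have hdisj' : ∀ d e, d ≠ e → Disjoint (Cx' d) (Cx' e) := by
      intro d e hde
      rw [Finset.disjoint_left]
      intro x hxd hxe
      rcases claim d x hxd with ⟨h1, h2⟩ | ⟨h1, h2⟩ <;>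
        rcases claim e x hxe with ⟨h3, h4⟩ | ⟨h3, h4⟩
      · exact hde (h2.trans h4.symm)
      · exact h3 h1
      · exact h1 h3
      · exact Finset.disjoint_left.1 (hdisj d e hde) h2 h4
    have hcover' : ∀ x ∈ activex, ∃ d, x ∈ Cx' d := by
      intro x hxm
      by_cases hxc : x = c
      · exact ⟨b, by simp [hCx', hxc]⟩
      obtain ⟨d, hd⟩ := hcover x hxm
      refine ⟨d, ?_⟩
      simp only [hCx']
      split_ifs with h1 h2
      · exact Finset.mem_insert_of_mem (h1 ▸ hd)
      · exact Finset.mem_erase.2 ⟨hxc, h2 ▸ hd⟩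
      · exact hd
    obtain ⟨activey, Cy, g1, g2, g3, g4, g5, g6, g7, g8⟩ :=
      IH _ hmeas balx' baly sumx sumy rfl hx' hy hle activex hax Cx' hsub' hcard' hdisj' hcover'
    refine ⟨activey, Cy, g1, g2, g3, g4, g5, g6, ?_, ?_⟩
    · intro d hd
      by_cases h1 : d = b
      · subst h1
        have h2 := g7 d (by rw [hbx' d, if_pos rfl]; omega)
        simp only [hCx', if_pos rfl] at h2
        exact subset_trans (Finset.subset_insert _ _) h2
      by_cases h2 : d = a
      · subst h2; omega
      · have h3 := g7 d (by rw [hbx' d, if_neg h1, if_neg h2]; omega)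
        simpa [hCx', h1, h2] using h3
    · intro d hd
      by_cases h1 : d = b
      · subst h1; omega
      by_cases h2 : d = a
      · subst h2
        have h3 := g8 d (by rw [hbx' d, if_neg h1, if_pos rfl]; omega)
        simp only [hCx', if_neg h1, if_pos rfl] at h3
        exact subset_trans h3 (Finset.erase_subset _ _)
      · have h3 := g8 d (by rw [hbx' d, if_neg h1, if_neg h2]; omega)
        simpa [hCx', h1, h2] using h3
  · push_neg at hdec
    by_cases heq : ∃ a, balx a < baly a
    · -- add a fresh coin to a
      obtain ⟨a, ha⟩ := heq
      have haT : a ∈ T := hTy (Finsupp.mem_support_iff.2 (by omega))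
      have hlt : sumx < sumy := by
        rw [hxT, hyT]
        exact Finset.sum_lt_sum (fun i _ => hdec i) ⟨a, haT, ha⟩
      obtain ⟨c, hc⟩ := Infinite.exists_notMem_finset activex
      set balx' : Address →₀ ℕ := balx.update a (balx a + 1) with hbalx'
      have hbx' : ∀ d, balx' d = if d = a then balx a + 1 else balx d := by
        intro d
        simp only [hbalx', Finsupp.coe_update, Function.update_apply]
      set Cx' : Address → Finset Coin :=
        fun d => if d = a then insert c (Cx a) else Cx d with hCx'
      have hsupp' : balx'.support ⊆ T := by
        intro d hd
        rw [Finsupp.mem_support_iff, hbx' d] at hd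
        by_cases h1 : d = a
        · rwa [h1]
        · rw [if_neg h1] at hd
          exact hTx (Finsupp.mem_support_iff.2 hd)
      have decomp : ∀ f : Address → ℕ, ∑ d ∈ T, f d = f a + ∑ d ∈ T.erase a, f d := by
        intro f; rw [Finset.add_sum_erase _ f haT]
      have htail : ∑ d ∈ T.erase a, balx' d = ∑ d ∈ T.erase a, balx d := by
        refine Finset.sum_congr rfl (fun d hd => ?_)
        rw [Finset.mem_erase] at hd
        rw [hbx' d, if_neg hd.1]
      have hx' : balx'.sum (fun _ n => n) = sumx + 1 := by
        rw [stmt10.sum_eq_T balx' T hsupp', decomp, htail, hbx' a, if_pos rfl, hxT, decomp]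
        omega
      have hmeas : stmt10.meas balx' baly < n := by
        rw [← hm, stmt10.meas_eq balx' baly T hsupp' hTy, stmt10.meas_eq balx baly T hTx hTy,
          decomp, decomp]
        have h1 : ∑ d ∈ T.erase a, (balx' d - baly d + (baly d - balx' d)) =
            ∑ d ∈ T.erase a, (balx d - baly d + (baly d - balx d)) := by
          refine Finset.sum_congr rfl (fun d hd => ?_)
          rw [Finset.mem_erase] at hd
          rw [hbx' d, if_neg hd.1]
        rw [h1, hbx' a, if_pos rfl]
        omega
      have hcfresh : ∀ d, c ∉ Cx d := fun d h => hc (hsub d h)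
      have hsub' : ∀ d, Cx' d ⊆ insert c activex := by
        intro d
        simp only [hCx']
        split_ifs with h1
        · exact Finset.insert_subset_insert _ (hsub a)
        · exact subset_trans (hsub d) (Finset.subset_insert _ _)
      have hcard' : ∀ d, (Cx' d).card = balx' d := by
        intro d
        rw [hbx' d]
        simp only [hCx']
        split_ifs with h1
        · rw [Finset.card_insert_of_notMem (hcfresh a), hcard a]
        · exact hcard d
      have claim : ∀ d x, x ∈ Cx' d → (x = c ∧ d = a) ∨ (x ≠ c ∧ x ∈ Cx d) := by
        intro d x hx
        simp only [hCx'] at hx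
        split_ifs at hx with h1
        · rw [Finset.mem_insert] at hx
          rcases hx with h | h
          · exact Or.inl ⟨h, h1⟩
          · exact Or.inr ⟨fun he => hcfresh a (he ▸ h), h1 ▸ h⟩
        · exact Or.inr ⟨fun he => hcfresh d (he ▸ hx), hx⟩
      have hdisj' : ∀ d e, d ≠ e → Disjoint (Cx' d) (Cx' e) := by
        intro d e hde
        rw [Finset.disjoint_left]
        intro x hxd hxe
        rcases claim d x hxd with ⟨h1, h2⟩ | ⟨h1, h2⟩ <;>
          rcases claim e x hxe with ⟨h3, h4⟩ | ⟨h3, h4⟩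
        · exact hde (h2.trans h4.symm)
        · exact h3 h1
        · exact h1 h3
        · exact Finset.disjoint_left.1 (hdisj d e hde) h2 h4
      have hcover' : ∀ x ∈ insert c activex, ∃ d, x ∈ Cx' d := by
        intro x hxm
        rw [Finset.mem_insert] at hxm
        rcases hxm with h | h
        · exact ⟨a, by simp [hCx', h]⟩
        obtain ⟨d, hd⟩ := hcover x h
        refine ⟨d, ?_⟩
        simp only [hCx']
        split_ifs with h1
        · exact Finset.mem_insert_of_mem (h1 ▸ hd)
        · exact hd
      obtain ⟨activey, Cy, g1, g2, g3, g4, g5, g6, g7, g8⟩ :=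
        IH _ hmeas balx' baly (sumx + 1) sumy rfl hx' hy (by omega) (insert c activex)
          (by rw [Finset.card_insert_of_notMem hc, hax]) Cx' hsub' hcard' hdisj' hcover'
      refine ⟨activey, Cy, subset_trans (Finset.subset_insert _ _) g1, g2, g3, g4, g5, g6, ?_, ?_⟩
      · intro d hd
        by_cases h1 : d = a
        · subst h1
          have h2 := g7 d (by rw [hbx' d, if_pos rfl]; omega)
          simp only [hCx', if_pos rfl] at h2
          exact subset_trans (Finset.subset_insert _ _) h2
        · have h2 := g7 d (by rw [hbx' d, if_neg h1]; omega)
          simpa [hCx', h1] using h2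
      · intro d hd
        by_cases h1 : d = a
        · subst h1; omega
        · have h2 := g8 d (by rw [hbx' d, if_neg h1]; omega)
          simpa [hCx', h1] using h2
    · -- balx = baly
      push_neg at heq
      have hfg : balx = baly := Finsupp.ext (fun a => le_antisymm (hdec a) (heq a))
      have hsxy : sumx = sumy := by rw [← hx, ← hy, hfg]
      exact ⟨activex, Cx, Finset.Subset.refl _, hsxy ▸ hax, hsub,
        fun a => hfg ▸ hcard a, hdisj, hcover,
        fun a _ => Finset.Subset.refl _, fun a _ => Finset.Subset.refl _⟩

theorem stmt10 {Address Coin : Type*} [DecidableEq Coin] [Infinite Coin]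
    (balx baly : Address →₀ ℕ) (sumx sumy : ℕ)
    (hx : balx.sum (fun _ n => n) = sumx) (hy : baly.sum (fun _ n => n) = sumy)
    (hle : sumx ≤ sumy)
    (activex : Finset Coin) (hax : activex.card = sumx)
    (Cx : Address → Finset Coin)
    (hsub : ∀ a, Cx a ⊆ activex)
    (hcard : ∀ a, (Cx a).card = balx a)
    (hdisj : ∀ a b, a ≠ b → Disjoint (Cx a) (Cx b))
    (hcover : ∀ c ∈ activex, ∃ a, c ∈ Cx a) :
    ∃ (activey : Finset Coin) (Cy : Address → Finset Coin),
      activex ⊆ activey ∧ activey.card = sumy ∧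
      (∀ a, Cy a ⊆ activey) ∧ (∀ a, (Cy a).card = baly a) ∧
      (∀ a b, a ≠ b → Disjoint (Cy a) (Cy b)) ∧
      (∀ c ∈ activey, ∃ a, c ∈ Cy a) ∧
      (∀ a, balx a ≤ baly a → Cx a ⊆ Cy a) ∧
      (∀ a, baly a ≤ balx a → Cy a ⊆ Cx a) := by
  exact stmt10.aux (stmt10.meas balx baly) balx baly sumx sumy rfl hx hy hle
    activex hax Cx hsub hcard hdisj hcover
end

section
/- Let f₀, f₁ : Coin → ℕ+ be bijections with f₀⁻¹([l₀,u₀]) = f₁⁻¹([l₁,u₁]) (as sets of coins, via the biconditional f₀(c) ∈ [l₀,u₀] ↔ f₁(c) ∈ [l₁,u₁]). Define f₁' : Coin → ℕ+ by f₁'(c) = f₀(c) − l₀ + l₁ if f₁(c) ∈ [l₁,u₁], and f₁'(c) = f₁(c) otherwise. Then f₁' is a bijection, satisfies f₁'(c) ∈ [l₁,u₁] ↔ f₁(c) ∈ [l₁,u₁] for all c, and for all c with f₀(c) ∈ [l₀,u₀] one has f₁'(c) + l₀ = f₀(c) + l₁. -/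
/-!
Both blocks have the same number of coins, so the intervals `[l₀, u₀]` and `[l₁, u₁]` have the
same length and the translation `n ↦ n - l₀ + l₁` maps the first bijectively onto the second.
Composing it with `f₀` on the block and keeping `f₁` outside gives the required bijection: both
pieces are bijections, of the block onto `[l₁, u₁]` and of its complement onto the complement.
-/

open Function Set

theorem Function.Bijective.card_eq_of_preimage_eq {α β γ : Type*} {f₀ : α → β} {f₁ : α → γ}
    {s : Set β} {t : Set γ} (hf₀ : Bijective f₀) (hf₁ : Bijective f₁)
    (h : f₀ ⁻¹' s = f₁ ⁻¹' t) : Nat.card s = Nat.card t := by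
  rw [← Nat.card_preimage_of_injective hf₀.injective (by simp [hf₀.surjective.range_eq]),
    ← Nat.card_preimage_of_injective hf₁.injective (by simp [hf₁.surjective.range_eq]), h]

theorem Function.Bijective.bijective_piecewise_preimage {α β : Type*} {f g : α → β} {t : Set β}
    [DecidablePred (· ∈ f ⁻¹' t)] (hf : Bijective f) (hg : BijOn g (f ⁻¹' t) t) :
    Bijective ((f ⁻¹' t).piecewise g f) := by
  have hfc : BijOn f (f ⁻¹' t)ᶜ tᶜ := hf.bijOn_preimage.compl hf
  refine ⟨(injective_piecewise_iff _).2 ⟨hg.injOn, hfc.injOn, ?_⟩, ?_⟩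
  · intro x hx y hy hxy
    exact hfc.mapsTo hy (hxy ▸ hg.mapsTo hx)
  · rw [← range_eq_univ, range_piecewise, hg.image_eq, hfc.image_eq, union_compl_self]

theorem Set.preimage_piecewise_preimage {α β : Type*} {f g : α → β} {t : Set β}
    [DecidablePred (· ∈ f ⁻¹' t)] (hg : MapsTo g (f ⁻¹' t) t) :
    (f ⁻¹' t).piecewise g f ⁻¹' t = f ⁻¹' t := by
  ext x
  by_cases hx : x ∈ f ⁻¹' t
  · rw [mem_preimage, piecewise_eq_of_mem _ _ _ hx]
    exact iff_of_true (hg hx) hx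
  · rw [mem_preimage, piecewise_eq_of_notMem _ _ _ hx, mem_preimage]

namespace PNat

def translate (a b n : ℕ+) : ℕ+ := ⟨n - a + b, by positivity⟩

@[simp]
theorem coe_translate (a b n : ℕ+) : (translate a b n : ℕ) = n - a + b := rfl

theorem natCard_Icc (a b : ℕ+) : Nat.card (Icc a b) = b + 1 - a := by
  rw [Nat.card_eq_fintype_card, card_fintype_Icc]

theorem bijOn_translate {l₀ u₀ l₁ u₁ : ℕ+} (h : (u₀ + 1 - l₀ : ℕ) = u₁ + 1 - l₁) :
    BijOn (translate l₀ l₁) (Icc l₀ u₀) (Icc l₁ u₁) := by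
  simp only [BijOn, MapsTo, InjOn, SurjOn, subset_def, mem_Icc, mem_image, ← coe_le_coe,
    ← PNat.coe_inj, coe_translate]
  refine ⟨fun n hn => by omega, fun m hm n hn hmn => by omega, fun m hm => ?_⟩
  exact ⟨translate l₁ l₀ m, by simp only [coe_translate]; omega⟩

end PNat

theorem stmt14_general {Coin : Type*} (f₀ f₁ : Coin → ℕ+)
    (hb₀ : Function.Bijective f₀) (hb₁ : Function.Bijective f₁)
    (l₀ u₀ l₁ u₁ : ℕ+)
    (h : ∀ c, f₀ c ∈ Set.Icc l₀ u₀ ↔ f₁ c ∈ Set.Icc l₁ u₁) :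
    ∃ f₁' : Coin → ℕ+,
      (∀ c, f₁ c ∈ Set.Icc l₁ u₁ → (f₁' c : ℕ) = (f₀ c : ℕ) - (l₀ : ℕ) + (l₁ : ℕ)) ∧
      (∀ c, f₁ c ∉ Set.Icc l₁ u₁ → f₁' c = f₁ c) ∧
      Function.Bijective f₁' ∧
      (∀ c, f₁' c ∈ Set.Icc l₁ u₁ ↔ f₁ c ∈ Set.Icc l₁ u₁) ∧
      (∀ c, f₀ c ∈ Set.Icc l₀ u₀ → (f₁' c : ℕ) + (l₀ : ℕ) = (f₀ c : ℕ) + (l₁ : ℕ)) := by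
  classical
  have hblock : f₀ ⁻¹' Icc l₀ u₀ = f₁ ⁻¹' Icc l₁ u₁ := ext h
  have hlen : (u₀ + 1 - l₀ : ℕ) = u₁ + 1 - l₁ := by
    rw [← PNat.natCard_Icc, ← PNat.natCard_Icc, hb₀.card_eq_of_preimage_eq hb₁ hblock]
  have hg : BijOn (PNat.translate l₀ l₁ ∘ f₀) (f₁ ⁻¹' Icc l₁ u₁) (Icc l₁ u₁) :=
    (PNat.bijOn_translate hlen).comp (hblock ▸ hb₀.bijOn_preimage)
  refine ⟨(f₁ ⁻¹' Icc l₁ u₁).piecewise (PNat.translate l₀ l₁ ∘ f₀) f₁,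
    fun c hc => by simp [hc], fun c hc => piecewise_eq_of_notMem _ _ _ hc,
    hb₁.bijective_piecewise_preimage hg,
    fun c => Set.ext_iff.1 (preimage_piecewise_preimage hg.mapsTo) c, fun c hc => ?_⟩
  have hl₀ : (l₀ : ℕ) ≤ f₀ c := hc.1
  rw [piecewise_eq_of_mem (f₁ ⁻¹' _) _ _ ((h c).1 hc), comp_apply, PNat.coe_translate]
  omega

theorem stmt14 {Coin : Type*} (f₀ f₁ : Coin → ℕ+)
    (hb₀ : Function.Bijective f₀) (hb₁ : Function.Bijective f₁)
    (l₀ u₀ l₁ u₁ : ℕ+) (h₀ : l₀ ≤ u₀) (h₁ : l₁ ≤ u₁)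
    (h : ∀ c, f₀ c ∈ Set.Icc l₀ u₀ ↔ f₁ c ∈ Set.Icc l₁ u₁) :
    ∃ f₁' : Coin → ℕ+,
      (∀ c, f₁ c ∈ Set.Icc l₁ u₁ → (f₁' c : ℕ) = (f₀ c : ℕ) - (l₀ : ℕ) + (l₁ : ℕ)) ∧
      (∀ c, f₁ c ∉ Set.Icc l₁ u₁ → f₁' c = f₁ c) ∧
      Function.Bijective f₁' ∧
      (∀ c, f₁' c ∈ Set.Icc l₁ u₁ ↔ f₁ c ∈ Set.Icc l₁ u₁) ∧
      (∀ c, f₀ c ∈ Set.Icc l₀ u₀ → (f₁' c : ℕ) + (l₀ : ℕ) = (f₀ c : ℕ) + (l₁ : ℕ)) :=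
  stmt14_general f₀ f₁ hb₀ hb₁ l₀ u₀ l₁ u₁ h
end

section
/- Let active be a finite set of coins, hc a finite ownership relation with C_a = {c : (a,c) ∈ hc}, and define the modified pair hc' = hc \ M_Pairs and active' = (active ∪ M_Inact) \ M_Most, where M_Inact, M_Most, M_Pairs are the error sets of (hc, active). If M_Least(hc, active) = ∅, then the modified pair (hc', active') satisfies all three invariants: every owned coin is active', every coin in active' is owned, and no coin is doubly owned. -/
theorem stmt18 {Address Coin : Type*} [DecidableEq Address] [DecidableEq Coin]
    (active : Finset Coin) (hc : Finset (Address × Coin))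
    (C : Address → Finset Coin) (hC : ∀ a c, c ∈ C a ↔ (a, c) ∈ hc)
    (MInact MMost : Finset Coin) (MPairs : Finset (Address × Coin))
    (hInact : ∀ c, c ∈ MInact ↔ (c ∉ active ∧ ∃ a, c ∈ C a))
    (hMost : ∀ c, c ∈ MMost ↔ ∃ a b, a ≠ b ∧ c ∈ C a ∧ c ∈ C b)
    (hPairs : ∀ a c, (a, c) ∈ MPairs ↔ (c ∈ C a ∧ ∃ b, b ≠ a ∧ c ∈ C b))
    (hLeastEmpty : ∀ c ∈ active, ∃ a, c ∈ C a) :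
    (∀ a c, (a, c) ∈ hc \ MPairs → c ∈ (active ∪ MInact) \ MMost) ∧
    (∀ c ∈ (active ∪ MInact) \ MMost, ∃ a, (a, c) ∈ hc \ MPairs) ∧
    (∀ a b c, (a, c) ∈ hc \ MPairs → (b, c) ∈ hc \ MPairs → a = b) := by
  refine ⟨?_, ?_, ?_⟩
  · intro a c h
    rw [Finset.mem_sdiff] at h
    obtain ⟨h1, h2⟩ := h
    have hca : c ∈ C a := (hC a c).2 h1
    have hno : ¬∃ b, b ≠ a ∧ c ∈ C b := fun hb => h2 ((hPairs a c).2 ⟨hca, hb⟩)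
    rw [Finset.mem_sdiff, Finset.mem_union]
    constructor
    · by_cases hca' : c ∈ active
      · exact Or.inl hca'
      · exact Or.inr ((hInact c).2 ⟨hca', a, hca⟩)
    · intro hm
      obtain ⟨x, y, hxy, hx, hy⟩ := (hMost c).1 hm
      rcases eq_or_ne x a with rfl | hxa
      · exact hno ⟨y, hxy.symm, hy⟩
      · exact hno ⟨x, hxa, hx⟩
  · intro c h
    rw [Finset.mem_sdiff, Finset.mem_union] at h
    obtain ⟨h1, h2⟩ := h
    have : ∃ a, c ∈ C a := by
      rcases h1 with h1 | h1
      · exact hLeastEmpty c h1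
      · exact ((hInact c).1 h1).2
    obtain ⟨a, ha⟩ := this
    refine ⟨a, Finset.mem_sdiff.2 ⟨(hC a c).1 ha, ?_⟩⟩
    intro hp
    obtain ⟨_, b, hba, hb⟩ := (hPairs a c).1 hp
    exact h2 ((hMost c).2 ⟨b, a, hba, hb, ha⟩)
  · intro a b c ha hb
    rw [Finset.mem_sdiff] at ha hb
    by_contra hab
    exact ha.2 ((hPairs a c).2 ⟨(hC a c).2 ha.1, b, Ne.symm hab, (hC b c).2 hb.1⟩)
end
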